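/- Let N be an odd positive integer and u an integer with gcd(u, N) = 1, and let z_u[n] = exp(−iπ u n(n+1)/N). Then distinct cyclic shifts of z_u are orthogonal: for all integers l, l' with 0 ≤ l < N, 0 ≤ l' < N and l ≠ l', one has ∑_{n=0}^{N−1} z_u[(n+l) mod N] · conj(z_u[(n+l') mod N]) = 0. -/

import Mathlib

/-!
Since `n(n+1)` is even, `z_u[n] = exp(-2πi u · n(n+1)/2 / N)` is a power of an `N`-th root of
unity, and for odd `N` it is `N`-periodic, so the reductions mod `N` can be dropped. The quotient
`z_u[n+l] / z_u[n+l']` is then `c · ωⁿ` with `ω = exp(2πi u(l'-l)/N)`: the quadratic terms cancel.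
Thus the correlation is a full geometric sum of the `N`-th root of unity `ω`, which vanishes
because `ω ≠ 1`: `N` does not divide `u(l'-l)`, as `u` is a unit mod `N` and `0 < |l'-l| < N`.
-/

open Finset Complex ComplexConjugate

noncomputable def zadoffChu (N : ℕ) (u : ℤ) (n : ℕ) : ℂ :=
  exp (-(I * (Real.pi : ℂ) * (u : ℂ) * (n : ℂ) * ((n : ℂ) + 1)) / (N : ℂ))

theorem zadoffChu_periodic {N : ℕ} (hN : Odd N) (u : ℤ) :
    Function.Periodic (zadoffChu N u) N := by
  intro m
  obtain ⟨k, rfl⟩ := hN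
  have hN_ne_zero : ((2 * k + 1 : ℕ) : ℂ) ≠ 0 := by exact_mod_cast (2 * k).succ_ne_zero
  -- `(m + N)(m + N + 1) - m(m + 1) = 2N(m + k + 1)` for `N = 2k + 1`
  have hexp : -(I * Real.pi * u * ((m + (2 * k + 1) : ℕ) : ℂ) * (((m + (2 * k + 1) : ℕ) : ℂ) + 1))
        / ((2 * k + 1 : ℕ) : ℂ)
      = ((-(u * (m + k + 1)) : ℤ) : ℂ) * (2 * Real.pi * I)
        + -(I * Real.pi * u * (m : ℂ) * ((m : ℂ) + 1)) / ((2 * k + 1 : ℕ) : ℂ) := by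
    field_simp
    push_cast
    ring
  rw [zadoffChu, zadoffChu, hexp, exp_add, exp_int_mul_two_pi_mul_I, one_mul]

theorem zadoffChu_add_mul_conj_zadoffChu_add (N : ℕ) (u : ℤ) (l l' n : ℕ) :
    zadoffChu N u (n + l) * conj (zadoffChu N u (n + l')) =
      exp (-(I * Real.pi * u * ((l : ℂ) - l') * (l + l' + 1)) / N) *
        exp (2 * Real.pi * I * ((u * ((l' : ℤ) - l) : ℤ) : ℂ) / N) ^ n := by
  rw [zadoffChu, zadoffChu, ← exp_conj, ← exp_nat_mul, ← exp_add, ← exp_add]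
  congr 1
  simp only [map_div₀, map_neg, map_mul, conj_I, map_natCast, map_intCast, map_add, map_one,
    conj_ofReal]
  push_cast
  ring

theorem geom_sum_exp_two_pi_I_mul_div_eq_zero {N : ℕ} (hN : N ≠ 0) {k : ℤ}
    (hk : ¬ (N : ℤ) ∣ k) : ∑ n ∈ range N, exp (2 * Real.pi * I * k / N) ^ n = 0 := by
  have hζ := isPrimitiveRoot_exp N hN
  have hω : exp (2 * Real.pi * I * k / N) = exp (2 * Real.pi * I / N) ^ k := by
    rw [← exp_int_mul]
    congr 1
    ring
  have hω_ne_one : exp (2 * Real.pi * I * k / N) ≠ 1 := by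
    rwa [hω, Ne, hζ.zpow_eq_one_iff_dvd]
  have hω_pow : exp (2 * Real.pi * I * k / N) ^ N = 1 := by
    rw [hω, ← zpow_natCast, ← zpow_mul, mul_comm k, zpow_mul, zpow_natCast, hζ.pow_eq_one,
      one_zpow]
  rw [geom_sum_eq hω_ne_one, hω_pow, sub_self, zero_div]

theorem not_dvd_mul_sub_of_gcd_eq_one {N : ℕ} {u : ℤ} (hu : Int.gcd u N = 1) {l l' : ℕ}
    (hl : l < N) (hl' : l' < N) (hne : l ≠ l') : ¬ (N : ℤ) ∣ u * ((l : ℤ) - l') := by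
  intro h
  have hdvd : (N : ℤ) ∣ (l : ℤ) - l' :=
    (Int.isCoprime_iff_gcd_eq_one.mpr hu).symm.dvd_of_dvd_mul_left h
  have hzero : (l : ℤ) - l' = 0 := Int.eq_zero_of_abs_lt_dvd hdvd (by rw [abs_lt]; omega)
  omega

theorem zadoff_chu_shifts_orthogonal_general
    (N : ℕ) (hNodd : Odd N) (u : ℤ) (hu : Int.gcd u N = 1)
    (z : ℕ → ℂ)
    (hz : ∀ n : ℕ, z n =
      Complex.exp (-(Complex.I * (Real.pi : ℂ) * (u : ℂ) * (n : ℂ) * ((n : ℂ) + 1)) / (N : ℂ)))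
    (l l' : ℕ) (hl : l < N) (hl' : l' < N) (hne : l ≠ l') :
    ∑ n ∈ Finset.range N, z ((n + l) % N) * (starRingEnd ℂ) (z ((n + l') % N)) = 0 := by
  obtain rfl : z = zadoffChu N u := funext hz
  simp only [(zadoffChu_periodic hNodd u).map_mod_nat]
  rw [sum_congr rfl fun n _ => zadoffChu_add_mul_conj_zadoffChu_add N u l l' n, ← mul_sum,
    geom_sum_exp_two_pi_I_mul_div_eq_zero hNodd.pos.ne'
      (not_dvd_mul_sub_of_gcd_eq_one hu hl' hl hne.symm),
    mul_zero]

/-- **Orthogonality of distinct cyclic shifts of a Zadoff-Chu sequence.**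
For an odd positive integer `N` and a root index `u` coprime to `N`, distinct
cyclic shifts of the Zadoff-Chu sequence `z_u[n] = exp(-iπ u n(n+1)/N)` are
orthogonal. -/
theorem zadoff_chu_shifts_orthogonal
    (N : ℕ) (hN : 0 < N) (hNodd : Odd N) (u : ℤ) (hu : Int.gcd u N = 1)
    (z : ℕ → ℂ)
    (hz : ∀ n : ℕ, z n =
      Complex.exp (-(Complex.I * (Real.pi : ℂ) * (u : ℂ) * (n : ℂ) * ((n : ℂ) + 1)) / (N : ℂ)))
    (l l' : ℕ) (hl : l < N) (hl' : l' < N) (hne : l ≠ l') :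
    ∑ n ∈ Finset.range N, z ((n + l) % N) * (starRingEnd ℂ) (z ((n + l') % N)) = 0 :=
  zadoff_chu_shifts_orthogonal_general N hNodd u hu z hz l l' hl hl' hne
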